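/- arXiv:1006.1156 — 5 statements merged into one kernel-verified Lean document; each statement's English description precedes it below -/
import Mathlib

section
/- Let L be a field, L(x) the rational function field in one variable over L, and G a finite group acting on L(x) such that for every σ ∈ G, σ(L) ⊆ L and σ(x) = a_σ·x + b_σ with a_σ, b_σ ∈ L, a_σ ≠ 0. Then L(x)^G = L^G(f) for some polynomial f ∈ L[x]. In fact, if m is the minimal degree ≥ 1 of a G-invariant polynomial in L[x], then any G-invariant polynomial f of degree m satisfies L(x)^G = L^G(f). -/
/-!
Each `σ ∈ G` acts on `L[x]` by `g ↦ g^{s_σ}(a_σ x + b_σ)` for a ring endomorphism `s_σ` of `L`,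
which preserves degrees. So if `g` and `f` are invariant, uniqueness of division with remainder
makes `g / f` and `g % f` invariant; by minimality of `deg f` the remainder is a fixed constant,
and induction on the degree puts every invariant polynomial in `L^G(f)`. A fixed rational function
`z` with denominator `q` is `(z N) / N` for the norm `N = ∏_{τ ∈ G} τ q`, and both `N` and `z N`
are invariant polynomials.
-/

open Polynomial

theorem mem_fixedPoints_subfield_iff {F : Type*} [Field F] (G : Subgroup (F ≃+* F)) {x : F} :
    x ∈ FixedPoints.subfield G F ↔ ∀ σ ∈ G, σ x = x :=
  ⟨fun h σ hσ => h ⟨σ, hσ⟩, fun h σ => h σ σ.2⟩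

theorem exists_fixed_mem_eq_div {F : Type*} [Field F] (G : Subgroup (F ≃+* F)) [Finite G]
    {R : Subring F} (hR : ∀ σ ∈ G, ∀ x ∈ R, σ x ∈ R) {z q : F} (hq : q ∈ R) (hq0 : q ≠ 0)
    (hzq : z * q ∈ R) (hz : ∀ σ ∈ G, σ z = z) :
    ∃ P ∈ R, ∃ Q ∈ R, (∀ σ ∈ G, σ P = P) ∧ (∀ σ ∈ G, σ Q = Q) ∧ z = P / Q := by
  classical
  have := Fintype.ofFinite G
  set Q := ∏ τ : G, (τ : F ≃+* F) q with hQ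
  have hQ0 : Q ≠ 0 := Finset.prod_ne_zero_iff.2 fun τ _ => by simpa using hq0
  have hQfix : ∀ σ ∈ G, σ Q = Q := fun σ hσ => by
    rw [hQ, map_prod]
    exact Fintype.prod_equiv (Equiv.mulLeft ⟨σ, hσ⟩) _ _ fun τ => rfl
  have hQsplit : Q = q * ∏ τ ∈ (Finset.univ : Finset G).erase 1, (τ : F ≃+* F) q :=
    (Finset.mul_prod_erase _ (fun τ : G => (τ : F ≃+* F) q) (Finset.mem_univ 1)).symm
  refine ⟨z * Q, ?_, Q, ?_, fun σ hσ => by rw [map_mul, hz σ hσ, hQfix σ hσ], hQfix,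
    (mul_div_cancel_right₀ z hQ0).symm⟩
  · rw [hQsplit, ← mul_assoc]
    exact R.mul_mem hzq (R.prod_mem fun τ _ => hR τ τ.2 q hq)
  · exact R.prod_mem fun τ _ => hR τ τ.2 q hq

namespace RatFunc

variable {L : Type*} [Field L]

theorem exists_ringHom_algebraMap_eq_map_comp (σ : RatFunc L →+* RatFunc L)
    (hL : ∀ l : L, ∃ l' : L, σ (C l) = C l') {a b : L} (hX : σ X = C a * X + C b) :
    ∃ s : L →+* L, ∀ g : L[X], σ (algebraMap L[X] (RatFunc L) g) =
      algebraMap L[X] (RatFunc L) ((g.map s).comp (.C a * .X + .C b)) := by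
  have hrange : ∀ l, (σ.comp C) l ∈ (C : L →+* RatFunc L).fieldRange := fun l => by
    obtain ⟨l', hl'⟩ := hL l
    exact ⟨l', hl'.symm⟩
  let s : L →+* L := (C : L →+* RatFunc L).rangeRestrictFieldEquiv.symm.toRingHom.comp
    ((σ.comp C).codRestrict _ hrange)
  have hs : ∀ l, C (s l) = σ (C l) := fun l =>
    C.rangeRestrictFieldEquiv_apply_symm_apply ⟨σ (C l), hrange l⟩
  refine ⟨s, fun g => ?_⟩
  induction g using Polynomial.induction_on' with
  | add p q hp hq => simp only [map_add, Polynomial.map_add, add_comp, hp, hq]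
  | monomial n l => simp [← Polynomial.C_mul_X_pow_eq_monomial, hs, hX]

theorem exists_algebraMap_eq_degree_eq (σ : RatFunc L →+* RatFunc L)
    (hL : ∀ l : L, ∃ l' : L, σ (C l) = C l') {a b : L} (ha : a ≠ 0) (hX : σ X = C a * X + C b)
    (g : L[X]) : ∃ g' : L[X], σ (algebraMap L[X] (RatFunc L) g) =
      algebraMap L[X] (RatFunc L) g' ∧ g'.degree = g.degree := by
  obtain ⟨s, hs⟩ := exists_ringHom_algebraMap_eq_map_comp σ hL hX
  refine ⟨_, hs g, ?_⟩
  rw [degree_comp (by rw [degree_linear ha]; exact zero_lt_one), degree_linear ha, mul_one,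
    degree_map]

variable (G : Subgroup (RatFunc L ≃+* RatFunc L))

def IsInvariant (g : L[X]) : Prop :=
  ∀ σ ∈ G, σ (algebraMap L[X] (RatFunc L) g) = algebraMap L[X] (RatFunc L) g

def PreservesDegree : Prop :=
  ∀ σ ∈ G, ∀ g : L[X], ∃ g' : L[X], σ (algebraMap L[X] (RatFunc L) g) =
    algebraMap L[X] (RatFunc L) g' ∧ g'.degree = g.degree

variable {G}

theorem IsInvariant.mod_and_div (hG : PreservesDegree G) {f g : L[X]} (hg : IsInvariant G g)
    (hf : IsInvariant G f) (hf0 : f ≠ 0) : IsInvariant G (g % f) ∧ IsInvariant G (g / f) := by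
  have hA := algebraMap_injective L
  suffices ∀ σ ∈ G, σ (algebraMap _ _ (g % f)) = algebraMap _ _ (g % f) ∧
      σ (algebraMap _ _ (g / f)) = algebraMap _ _ (g / f) from
    ⟨fun σ hσ => (this σ hσ).1, fun σ hσ => (this σ hσ).2⟩
  intro σ hσ
  obtain ⟨r, hr, hrdeg⟩ := hG σ hσ (g % f)
  obtain ⟨w, hw, -⟩ := hG σ hσ (g / f)
  have hgfwr : g = f * w + r := hA <| by
    conv_lhs => rw [← hg σ hσ, ← EuclideanDomain.div_add_mod g f]
    simp only [map_add, map_mul, hf σ hσ, hw, hr]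
  have hrmod : r = g % f := by
    rw [mod_eq_of_dvd_sub (p₂ := r) ⟨w, by rw [hgfwr, add_sub_cancel_right]⟩,
      (mod_eq_self_iff hf0).2 (hrdeg ▸ degree_mod_lt g hf0)]
  have hwdiv : w = g / f := mul_left_cancel₀ hf0 <| by
    rw [← add_right_cancel_iff (a := r), ← hgfwr, hrmod, EuclideanDomain.div_add_mod]
  exact ⟨hr.trans (congrArg _ hrmod), hw.trans (congrArg _ hwdiv)⟩

theorem algebraMap_mem_of_isInvariant (hG : PreservesDegree G) (K : Subfield (RatFunc L))
    (hK : ∀ l : L, (∀ σ ∈ G, σ (C l) = C l) → C l ∈ K) {f : L[X]} (hf : IsInvariant G f)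
    (hfK : algebraMap L[X] (RatFunc L) f ∈ K) (hf0 : 0 < f.natDegree)
    (hmin : ∀ g, IsInvariant G g → g.natDegree < f.natDegree → g.natDegree = 0)
    {g : L[X]} (hg : IsInvariant G g) : algebraMap L[X] (RatFunc L) g ∈ K := by
  induction hn : g.natDegree using Nat.strong_induction_on generalizing g with
  | _ n ih =>
  obtain ⟨hmod, hdiv⟩ := hg.mod_and_div hG hf (ne_zero_of_natDegree_gt hf0)
  have hmodK : algebraMap L[X] (RatFunc L) (g % f) ∈ K := by
    obtain ⟨c, hc⟩ := natDegree_eq_zero.1 (hmin _ hmod (natDegree_mod_lt g hf0.ne'))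
    rw [← hc] at hmod
    rw [← hc, algebraMap_C]
    exact hK c (by simpa only [IsInvariant, algebraMap_C] using hmod)
  have hdivK : algebraMap L[X] (RatFunc L) (g / f) ∈ K := by
    rcases eq_or_ne (g / f) 0 with h | h
    · rw [h, map_zero]
      exact K.zero_mem
    have hg0 : g ≠ 0 := fun hg0 => h (by rw [hg0, EuclideanDomain.zero_div])
    exact ih _ (hn ▸ natDegree_lt_natDegree h
      (degree_div_lt hg0 (natDegree_pos_iff_degree_pos.1 hf0))) hdiv rfl
  rw [← EuclideanDomain.div_add_mod g f, map_add, map_mul]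
  exact K.add_mem (K.mul_mem hfK hdivK) hmodK

theorem exists_isInvariant_eq_div [Finite G]
    (hG : ∀ σ ∈ G, ∀ g : L[X], σ (algebraMap L[X] (RatFunc L) g) ∈
      (algebraMap L[X] (RatFunc L)).range) {z : RatFunc L} (hz : ∀ σ ∈ G, σ z = z) :
    ∃ p q : L[X], IsInvariant G p ∧ IsInvariant G q ∧
      z = algebraMap L[X] (RatFunc L) p / algebraMap L[X] (RatFunc L) q := by
  have hden : algebraMap L[X] (RatFunc L) z.denom ≠ 0 :=
    (map_ne_zero_iff _ (algebraMap_injective L)).2 z.denom_ne_zero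
  obtain ⟨_, ⟨p, rfl⟩, _, ⟨q, rfl⟩, hp, hq, hzpq⟩ := exists_fixed_mem_eq_div G
    (R := (algebraMap L[X] (RatFunc L)).range) (by rintro σ hσ _ ⟨g, rfl⟩; exact hG σ hσ g)
    ⟨z.denom, rfl⟩ hden ⟨z.num, ((eq_div_iff hden).1 (num_div_denom z).symm).symm⟩ hz
  exact ⟨p, q, hp, hq, hzpq⟩

end RatFunc

/-- **(Ahmad–Hajja–Kang)** Let `L` be a field, `L(x)` the rational function field in one
variable over `L`, and `G` a finite group of field automorphisms of `L(x)` such that every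
`σ ∈ G` maps `L` into `L` and sends `x` to `a_σ·x + b_σ` with `a_σ, b_σ ∈ L`, `a_σ ≠ 0`.
If `m` is the minimal degree `≥ 1` of a `G`-invariant polynomial in `L[x]`, then any
`G`-invariant polynomial `f` of degree `m` satisfies `L(x)^G = L^G(f)`, i.e. the fixed field
of `G` is the subfield generated by the `G`-fixed elements of `L` together with `f(x)`. -/
theorem stmt_0 (L : Type*) [Field L]
    (G : Subgroup (RatFunc L ≃+* RatFunc L)) [Finite G]
    (hL : ∀ σ ∈ G, ∀ l : L, ∃ l' : L, σ (RatFunc.C l) = RatFunc.C l')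
    (hx : ∀ σ ∈ G, ∃ a b : L, a ≠ 0 ∧
      σ RatFunc.X = RatFunc.C a * RatFunc.X + RatFunc.C b)
    (m : ℕ)
    (hm : IsLeast {d : ℕ | 1 ≤ d ∧ ∃ g : Polynomial L, g.natDegree = d ∧
      ∀ σ ∈ G, σ (Polynomial.aeval RatFunc.X g) = Polynomial.aeval RatFunc.X g} m)
    (f : Polynomial L) (hfdeg : f.natDegree = m)
    (hfinv : ∀ σ ∈ G, σ (Polynomial.aeval RatFunc.X f) = Polynomial.aeval RatFunc.X f) :
    {z : RatFunc L | ∀ σ ∈ G, σ z = z} =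
      (Subfield.closure ((RatFunc.C '' {l : L | ∀ σ ∈ G, σ (RatFunc.C l) = RatFunc.C l})
        ∪ {Polynomial.aeval RatFunc.X f}) : Subfield (RatFunc L)) := by
  simp only [RatFunc.aeval_X_left_eq_algebraMap] at hm hfinv ⊢
  have hG : RatFunc.PreservesDegree G := fun σ hσ => by
    obtain ⟨a, b, ha, hX⟩ := hx σ hσ
    exact RatFunc.exists_algebraMap_eq_degree_eq σ.toRingHom (hL σ hσ) ha hX
  subst hfdeg
  have hmin : ∀ g, RatFunc.IsInvariant G g → g.natDegree < f.natDegree → g.natDegree = 0 :=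
    fun g hg hlt => by_contra fun h => (hm.2 ⟨Nat.pos_of_ne_zero h, g, rfl, hg⟩).not_gt hlt
  refine Set.Subset.antisymm (fun z hz => ?_) (fun z hz => ?_)
  · obtain ⟨p, q, hp, hq, rfl⟩ := RatFunc.exists_isInvariant_eq_div
      (fun σ hσ g => (hG σ hσ g).imp fun _ h => h.1.symm) hz
    refine Subfield.div_mem _ ?_ ?_ <;>
      refine RatFunc.algebraMap_mem_of_isInvariant hG _
        (fun l hl => Subfield.subset_closure (Or.inl ⟨l, hl, rfl⟩)) hfinv
        (Subfield.subset_closure (Or.inr rfl)) hm.1.1 hmin ?_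
    exacts [hp, hq]
  · refine (mem_fixedPoints_subfield_iff G).1 (Subfield.closure_le.2 ?_ hz)
    rintro _ (⟨l, hl, rfl⟩ | rfl)
    exacts [(mem_fixedPoints_subfield_iff G).2 hl, (mem_fixedPoints_subfield_iff G).2 hfinv]
end

section
/- Let k be a field with char k ≠ 2, a ∈ k\{0}, and σ the k-automorphism of k(x,y) with σ(x) = a/x, σ(y) = a/y. Set u = (x − y)/(a − xy) and v = (x + y)/(a + xy). Then k(x,y)^⟨σ⟩ = k(u,v). -/
/-!
Both `u` and `v` are fixed by `σ`, so `k(u,v) ⊆ k(x,y)^σ`, and `[k(x,y) : k(x,y)^σ] = 2` by Artin's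
theorem since `σ` has order two. Conversely `y = (a u - x)/(u x - 1)` lies in `k(u,v)(x)`, and `x` is a
root of `(u + v) X² - 2 (1 + a u v) X + a (u + v)`, whose leading coefficient `u + v` is nonzero
because `char k ≠ 2`. Hence `[k(x,y) : k(u,v)] ≤ 2` and the two fields coincide.
-/

open IntermediateField Module

namespace IntermediateField

variable {k K : Type*} [Field k] [Field K] [Algebra k K]

theorem algHom_ext_of_adjoin_eq_top {L : Type*} [Field L] [Algebra k L] {s : Set K}
    (hs : adjoin k s = ⊤) {f g : K →ₐ[k] L} (h : Set.EqOn f g s) : f = g := by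
  have hcomp := algHom_ext_of_eq_adjoin k (K := L) hs.symm
    (φ₁ := f.comp (⊤ : IntermediateField k K).val) (φ₂ := g.comp (⊤ : IntermediateField k K).val)
    fun z hz ↦ h hz
  ext z
  exact DFunLike.congr_fun hcomp ⟨z, mem_top⟩

theorem mem_fixedField_zpowers_iff {σ : K ≃ₐ[k] K} {z : K} :
    z ∈ fixedField (Subgroup.zpowers σ) ↔ σ z = z := by
  rw [mem_fixedField_iff, Subgroup.forall_mem_zpowers]
  exact MulAction.mem_fixedBy_zpowers_iff_mem_fixedBy (α := K) (g := σ)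

theorem finrank_fixedField_zpowers {σ : K ≃ₐ[k] K} (hσ : 0 < orderOf σ) :
    finrank (fixedField (Subgroup.zpowers σ)) K = orderOf σ := by
  have : Finite (Subgroup.zpowers σ) :=
    Nat.finite_of_card_ne_zero (by rw [Nat.card_zpowers]; exact hσ.ne')
  have := Fintype.ofFinite (Subgroup.zpowers σ)
  rw [← Nat.card_zpowers, Nat.card_eq_fintype_card]
  exact FixedPoints.finrank_eq_card (Subgroup.zpowers σ) K

theorem fixedField_zpowers_eq_of_le {σ : K ≃ₐ[k] K} {E : IntermediateField k K}
    [FiniteDimensional E K] (hE : E ≤ fixedField (Subgroup.zpowers σ))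
    (h : finrank E K ≤ orderOf σ) : fixedField (Subgroup.zpowers σ) = E := by
  have hσ : 0 < orderOf σ := Module.finrank_pos.trans_le h
  exact (eq_of_le_of_finrank_le' hE (h.trans (finrank_fixedField_zpowers hσ).ge)).symm

theorem finiteDimensional_of_adjoin_simple_eq_top {F : Type*} [Field F] [Algebra F K] {x : K}
    (hx : F⟮x⟯ = ⊤) (hint : IsIntegral F x) : FiniteDimensional F K := by
  have := adjoin.finiteDimensional hint
  rw [hx] at this
  exact topEquiv.toLinearEquiv.finiteDimensional

theorem finrank_le_natDegree_of_adjoin_simple_eq_top {F : Type*} [Field F] [Algebra F K] {x : K}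
    (hx : F⟮x⟯ = ⊤) {p : Polynomial F} (hp : p ≠ 0) (hpx : Polynomial.aeval x p = 0) :
    finrank F K ≤ p.natDegree := by
  have hint : IsIntegral F x := IsAlgebraic.isIntegral ⟨p, hp, hpx⟩
  rw [← finrank_top', ← hx, adjoin.finrank hint]
  exact Polynomial.natDegree_le_of_dvd (minpoly.dvd F x hpx) hp

end IntermediateField

theorem IsFractionRing.adjoin_algebraMap_image_eq_top {k A K : Type*} [Field k] [CommRing A]
    [Algebra k A] [Field K] [Algebra k K] [Algebra A K] [IsFractionRing A K] [IsScalarTower k A K]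
    {s : Set A} (hs : Algebra.adjoin k s = ⊤) : adjoin k (algebraMap A K '' s) = ⊤ := by
  have hrange : (IsScalarTower.toAlgHom k A K).range = Algebra.adjoin k (algebraMap A K '' s) := by
    rw [← Algebra.map_top, ← hs, ← Algebra.adjoin_image]
    rfl
  rw [← algHom_fieldRange_eq_of_comp_eq_of_range_eq (f := AlgHom.id k K) rfl hrange]
  exact eq_top_iff.2 fun z _ ↦ AlgHom.mem_fieldRange.2 ⟨z, rfl⟩

theorem MvPolynomial.adjoin_X_pair_eq_top (k : Type*) [Field k] :
    adjoin k {algebraMap (MvPolynomial (Fin 2) k) (FractionRing (MvPolynomial (Fin 2) k)) (X 0),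
      algebraMap (MvPolynomial (Fin 2) k) (FractionRing (MvPolynomial (Fin 2) k)) (X 1)} = ⊤ := by
  have hX : Set.range (X : Fin 2 → MvPolynomial (Fin 2) k) = {X 0, X 1} := by
    ext; simp [Fin.exists_fin_two, eq_comm]
  rw [← Set.image_pair, ← hX]
  exact IsFractionRing.adjoin_algebraMap_image_eq_top (MvPolynomial.adjoin_range_X)

theorem MvPolynomial.algebraMap_ne_zero_of_eval_ne_zero {ι k K : Type*} [Field k] [CommRing K]
    [Algebra (MvPolynomial ι k) K] [IsFractionRing (MvPolynomial ι k) K] {p : MvPolynomial ι k}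
    (f : ι → k) (h : eval f p ≠ 0) : algebraMap _ K p ≠ 0 :=
  (map_ne_zero_iff _ (IsFractionRing.injective _ K)).2 fun hp ↦ h (by rw [hp, map_zero])

namespace Yamasaki

variable {K : Type*} [Field K] {c x y : K}

def u (c x y : K) : K := (x - y) / (c - x * y)

def v (c x y : K) : K := (x + y) / (c + x * y)

theorem u_div_div (hc : c ≠ 0) (hx : x ≠ 0) (hy : y ≠ 0) (hxy : c - x * y ≠ 0) :
    u c (c / x) (c / y) = u c x y := by
  have hxy' : x * y - c ≠ 0 := by rwa [← neg_sub, neg_ne_zero]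
  unfold u
  rw [div_eq_div_iff _ hxy]
  · field_simp
    ring
  · field_simp
    exact div_ne_zero (mul_ne_zero hc hxy') (mul_ne_zero hx hy)

theorem v_div_div (hc : c ≠ 0) (hx : x ≠ 0) (hy : y ≠ 0) (hxy : c + x * y ≠ 0) :
    v c (c / x) (c / y) = v c x y := by
  unfold v
  rw [div_eq_div_iff _ hxy]
  · field_simp
    ring
  · field_simp
    rw [add_comm]
    exact div_ne_zero (mul_ne_zero hc hxy) (mul_ne_zero hx hy)

theorem quadratic_eq_zero (h₁ : c - x * y ≠ 0) (h₂ : c + x * y ≠ 0) :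
    (u c x y + v c x y) * x ^ 2 - 2 * (1 + c * u c x y * v c x y) * x + c * (u c x y + v c x y)
      = 0 := by
  unfold u v
  field_simp
  ring

theorem u_add_v_ne_zero (h2 : (2 : K) ≠ 0) (hx : x ≠ 0) (hy : y ^ 2 ≠ c)
    (h₁ : c - x * y ≠ 0) (h₂ : c + x * y ≠ 0) : u c x y + v c x y ≠ 0 := by
  have : u c x y + v c x y = 2 * x * (c - y ^ 2) / ((c - x * y) * (c + x * y)) := by
    unfold u v
    field_simp
    ring
  rw [this]
  exact div_ne_zero (mul_ne_zero (mul_ne_zero h2 hx) (sub_ne_zero.2 hy.symm)) (mul_ne_zero h₁ h₂)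

theorem y_eq_div_u (hx : x ^ 2 ≠ c) (h₁ : c - x * y ≠ 0) :
    y = (c * u c x y - x) / (u c x y * x - 1) := by
  have : u c x y * x - 1 = (x ^ 2 - c) / (c - x * y) := by
    unfold u
    field_simp
    ring
  rw [eq_div_iff (this ▸ div_ne_zero (sub_ne_zero.2 hx) h₁), this]
  unfold u
  rw [mul_div_assoc', eq_sub_iff_add_eq, div_add' _ _ _ h₁, mul_div_assoc', div_left_inj' h₁]
  ring

section FixedField

variable {k K : Type*} [Field k] [Field K] [Algebra k K] {a : k} {x y : K}

theorem orderOf_eq_two (hgen : adjoin k {x, y} = ⊤) (ha : a ≠ 0) (hx : x ≠ 0)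
    (hx2 : x ^ 2 ≠ algebraMap k K a) {σ : K ≃ₐ[k] K}
    (hσx : σ x = algebraMap k K a / x) (hσy : σ y = algebraMap k K a / y) : orderOf σ = 2 := by
  have hc : algebraMap k K a ≠ 0 := (map_ne_zero _).2 ha
  have hσσ : ∀ z ∈ ({x, y} : Set K), σ (σ z) = z := by
    rintro z (rfl | rfl)
    · rw [hσx, map_div₀, AlgEquiv.commutes, hσx, div_div_cancel₀ hc]
    · rw [hσy, map_div₀, AlgEquiv.commutes, hσy, div_div_cancel₀ hc]
  refine orderOf_eq_prime (AlgEquiv.coe_toAlgHom_injective ?_) fun h ↦ hx2 ?_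
  · exact algHom_ext_of_adjoin_eq_top hgen hσσ
  · have : σ x = x := by rw [h]; rfl
    rw [hσx, div_eq_iff hx] at this
    rw [sq, this]

theorem adjoin_le_fixedField (ha : a ≠ 0) (hx : x ≠ 0) (hy : y ≠ 0)
    (h₁ : algebraMap k K a - x * y ≠ 0) (h₂ : algebraMap k K a + x * y ≠ 0) {σ : K ≃ₐ[k] K}
    (hσx : σ x = algebraMap k K a / x) (hσy : σ y = algebraMap k K a / y) :
    adjoin k {u (algebraMap k K a) x y, v (algebraMap k K a) x y} ≤
      fixedField (Subgroup.zpowers σ) := by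
  have hc : algebraMap k K a ≠ 0 := (map_ne_zero _).2 ha
  refine adjoin_le_iff.2 (Set.pair_subset ?_ ?_) <;> rw [SetLike.mem_coe, mem_fixedField_zpowers_iff]
  · unfold u
    rw [map_div₀, map_sub, map_sub, map_mul, AlgEquiv.commutes, hσx, hσy]
    exact u_div_div hc hx hy h₁
  · unfold v
    rw [map_div₀, map_add, map_add, map_mul, AlgEquiv.commutes, hσx, hσy]
    exact v_div_div hc hx hy h₂

theorem adjoin_adjoin_simple_eq_top (hgen : adjoin k {x, y} = ⊤)
    (hx2 : x ^ 2 ≠ algebraMap k K a) (h₁ : algebraMap k K a - x * y ≠ 0) :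
    (adjoin k {u (algebraMap k K a) x y, v (algebraMap k K a) x y})⟮x⟯ = ⊤ := by
  set E := adjoin k {u (algebraMap k K a) x y, v (algebraMap k K a) x y}
  have hxm : x ∈ E⟮x⟯ := mem_adjoin_simple_self E x
  have hum : u (algebraMap k K a) x y ∈ E⟮x⟯ :=
    (E⟮x⟯).algebraMap_mem (⟨_, subset_adjoin _ _ (Set.mem_insert _ _)⟩ : E)
  have hcm : algebraMap k K a ∈ E⟮x⟯ := (E⟮x⟯).algebraMap_mem (algebraMap k E a)
  have hym : y ∈ E⟮x⟯ := by
    rw [y_eq_div_u hx2 h₁]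
    exact div_mem (sub_mem (mul_mem hcm hum) hxm) (sub_mem (mul_mem hum hxm) (one_mem _))
  have hle : adjoin k {x, y} ≤ (E⟮x⟯).restrictScalars k := adjoin_le_iff.2 (Set.pair_subset hxm hym)
  rw [hgen] at hle
  exact eq_top_iff.2 fun z _ ↦ hle mem_top

open Polynomial in
theorem exists_quadratic_aeval_eq_zero (h2 : (2 : K) ≠ 0) (hx : x ≠ 0)
    (hy2 : y ^ 2 ≠ algebraMap k K a) (h₁ : algebraMap k K a - x * y ≠ 0)
    (h₂ : algebraMap k K a + x * y ≠ 0) :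
    ∃ q : (adjoin k {u (algebraMap k K a) x y, v (algebraMap k K a) x y})[X],
      q ≠ 0 ∧ q.natDegree ≤ 2 ∧ aeval x q = 0 := by
  set E := adjoin k {u (algebraMap k K a) x y, v (algebraMap k K a) x y}
  let U : E := ⟨_, subset_adjoin _ _ (Set.mem_insert _ _)⟩
  let V : E := ⟨_, subset_adjoin _ _ (Set.mem_insert_of_mem _ rfl)⟩
  have hUV : U + V ≠ 0 := fun h ↦ u_add_v_ne_zero h2 hx hy2 h₁ h₂ congr(Subtype.val $h)
  refine ⟨C (U + V) * X ^ 2 + C (-(2 * (1 + algebraMap k E a * U * V))) * X +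
    C (algebraMap k E a * (U + V)),
    leadingCoeff_ne_zero.1 (by rwa [leadingCoeff_quadratic hUV]), natDegree_quadratic_le, ?_⟩
  simp only [map_add, map_mul, map_neg, map_one, map_ofNat, aeval_C, aeval_X, map_pow,
    IntermediateField.algebraMap_apply, IntermediateField.coe_algebraMap_apply]
  linear_combination quadratic_eq_zero h₁ h₂

theorem fixedField_zpowers_eq_adjoin (h2 : (2 : k) ≠ 0) (ha : a ≠ 0)
    (hgen : adjoin k {x, y} = ⊤) (hx : x ≠ 0) (hy : y ≠ 0) (hx2 : x ^ 2 ≠ algebraMap k K a)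
    (hy2 : y ^ 2 ≠ algebraMap k K a) (h₁ : algebraMap k K a - x * y ≠ 0)
    (h₂ : algebraMap k K a + x * y ≠ 0) {σ : K ≃ₐ[k] K}
    (hσx : σ x = algebraMap k K a / x) (hσy : σ y = algebraMap k K a / y) :
    fixedField (Subgroup.zpowers σ) =
      adjoin k {u (algebraMap k K a) x y, v (algebraMap k K a) x y} := by
  have h2K : (2 : K) ≠ 0 := by rw [← map_ofNat (algebraMap k K) 2]; exact (map_ne_zero _).2 h2
  obtain ⟨q, hq0, hq2, hqx⟩ := exists_quadratic_aeval_eq_zero h2K hx hy2 h₁ h₂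
  have htop := adjoin_adjoin_simple_eq_top hgen hx2 h₁
  have := finiteDimensional_of_adjoin_simple_eq_top htop (IsAlgebraic.isIntegral ⟨q, hq0, hqx⟩)
  refine fixedField_zpowers_eq_of_le (adjoin_le_fixedField ha hx hy h₁ h₂ hσx hσy) ?_
  rw [orderOf_eq_two hgen ha hx hx2 hσx hσy]
  exact (finrank_le_natDegree_of_adjoin_simple_eq_top htop hq0 hqx).trans hq2

end FixedField

end Yamasaki

/-- **(Yamasaki)** Let `k` be a field with `char k ≠ 2`, `a ∈ k \ {0}`, and `σ` the
`k`-automorphism of the rational function field `k(x,y)` with `σ(x) = a/x`, `σ(y) = a/y`.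
With `u = (x − y)/(a − xy)` and `v = (x + y)/(a + xy)`, one has `k(x,y)^⟨σ⟩ = k(u,v)`. -/
theorem stmt_3 (k : Type*) [Field k] (hchar : (2 : k) ≠ 0)
    (x y : FractionRing (MvPolynomial (Fin 2) k))
    (hx : x = algebraMap (MvPolynomial (Fin 2) k) _ (MvPolynomial.X 0))
    (hy : y = algebraMap (MvPolynomial (Fin 2) k) _ (MvPolynomial.X 1))
    (a : k) (ha : a ≠ 0)
    (σ : FractionRing (MvPolynomial (Fin 2) k) ≃ₐ[k] FractionRing (MvPolynomial (Fin 2) k))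
    (hσx : σ x = algebraMap k _ a / x) (hσy : σ y = algebraMap k _ a / y)
    (u v : FractionRing (MvPolynomial (Fin 2) k))
    (hu : u = (x - y) / (algebraMap k _ a - x * y))
    (hv : v = (x + y) / (algebraMap k _ a + x * y)) :
    IntermediateField.fixedField (Subgroup.zpowers σ) =
      IntermediateField.adjoin k {u, v} := by
  subst hx hy hu hv
  have hc : algebraMap k (FractionRing (MvPolynomial (Fin 2) k)) a =
      algebraMap (MvPolynomial (Fin 2) k) _ (MvPolynomial.C a) := by
    rw [IsScalarTower.algebraMap_apply k (MvPolynomial (Fin 2) k), MvPolynomial.algebraMap_eq]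
  have hne (p : MvPolynomial (Fin 2) k) (f : Fin 2 → k) (h : MvPolynomial.eval f p ≠ 0) :
      algebraMap (MvPolynomial (Fin 2) k) (FractionRing (MvPolynomial (Fin 2) k)) p ≠ 0 :=
    MvPolynomial.algebraMap_ne_zero_of_eval_ne_zero f h
  refine Yamasaki.fixedField_zpowers_eq_adjoin hchar ha (MvPolynomial.adjoin_X_pair_eq_top k)
    (hne _ 1 (by simp)) (hne _ 1 (by simp)) ?_ ?_ ?_ ?_ hσx hσy
  iterate 2 rw [hc, ← sub_ne_zero, ← map_pow, ← map_sub]; exact hne _ 0 (by simpa using ha)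
  all_goals simp only [hc, ← map_mul, ← map_sub, ← map_add]; exact hne _ 0 (by simpa using ha)
end

section
/- Let k be any field and σ the k-automorphism of k(x,y,z) given by the 3-cycle x ↦ y ↦ z ↦ x. With s_1 = x+y+z, s_3 = xyz, u = (x²y + y²z + z²x − 3xyz)/(x² + y² + z² − xy − yz − zx), and v = (xy² + yz² + zx² − 3xyz)/(x² + y² + z² − xy − yz − zx), one has k(x,y,z)^⟨σ⟩ = k(s_1, u, v) = k(s_3, u, v). -/
/-!
The automorphism `σ` fixes `s₁`, `s₃`, `u`, `v` and has order 3, so by Artin's theorem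
`k(x,y,z)` has degree 3 over its fixed field. For `E = k(s₁,u,v)` or `E = k(s₃,u,v)`,
which lies in the fixed field, it therefore suffices that `[k(x,y,z) : E] ≤ 3`.
The identities `s₂ = s₁(u + v) - 3(u² - uv + v²)` and `s₃ = s₁uv - u³ - v³` put all
elementary symmetric functions of `x, y, z` into `E`, so `x` is a root of a cubic over `E`;
and `y(x - y)(x - z) = u(s₁² - 3s₂) + 3s₃ - x(y² + yz + z²)` shows that `y`, hence also
`z = s₁ - x - y`, lies in `E(x)`. Thus `k(x,y,z) = E(x)` has degree at most 3 over `E`.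
-/

open IntermediateField Module MvPolynomial

open scoped Polynomial

section

variable {k K : Type*} [Field k] [Field K] [Algebra k K]

theorem IntermediateField.mem_fixedField_zpowers_iff_s4 {σ : K ≃ₐ[k] K} {w : K} :
    w ∈ fixedField (Subgroup.zpowers σ) ↔ σ w = w := by
  rw [mem_fixedField_iff]
  refine ⟨fun h ↦ h σ (Subgroup.mem_zpowers σ), fun h _ hf ↦ ?_⟩
  have : Subgroup.zpowers σ ≤ MulAction.stabilizer (K ≃ₐ[k] K) w := Subgroup.zpowers_le.mpr h
  exact this hf

theorem IntermediateField.algEquiv_eq_one_of_adjoin_eq_top {s : Set K} (hs : adjoin k s = ⊤)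
    {τ : K ≃ₐ[k] K} (hτ : ∀ a ∈ s, τ a = a) : τ = 1 := by
  have : adjoin k s ≤ fixedField (Subgroup.zpowers τ) :=
    adjoin_le_iff.mpr fun a ha ↦ mem_fixedField_zpowers_iff_s4.mpr (hτ a ha)
  rwa [hs, le_iff_le, fixingSubgroup_top, Subgroup.zpowers_le, Subgroup.mem_bot] at this

theorem IntermediateField.fixedField_eq_of_adjoin_simple_eq_top
    {H : Subgroup (K ≃ₐ[k] K)} [Finite H] {E : IntermediateField k K} (hE : E ≤ fixedField H)
    {α : K} (hα : adjoin E {α} = ⊤) {p : E[X]} (hp : p.Monic) (hpα : Polynomial.aeval α p = 0)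
    (hdeg : p.natDegree ≤ Nat.card H) : fixedField H = E := by
  have hint : IsIntegral E α := ⟨p, hp, hpα⟩
  have : FiniteDimensional E K := by
    have := adjoin.finiteDimensional hint
    rw [hα] at this
    exact topEquiv.toLinearEquiv.finiteDimensional
  have := Fintype.ofFinite H
  refine (eq_of_le_of_finrank_le' hE ?_).symm
  calc finrank E K = finrank E (adjoin E {α}) := by rw [hα, finrank_top']
    _ = (minpoly E α).natDegree := adjoin.finrank hint
    _ ≤ p.natDegree := Polynomial.natDegree_le_natDegree (minpoly.min E α hp hpα)
    _ ≤ Nat.card H := hdeg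
    _ = finrank (fixedField H) K := by
      rw [Nat.card_eq_fintype_card]
      exact (FixedPoints.finrank_eq_card H K).symm

variable {x y z u v : K}

theorem exists_monic_cubic_aeval_eq_zero {E : IntermediateField k K}
    (h₁ : x + y + z ∈ E) (h₂ : x * y + y * z + z * x ∈ E) (h₃ : x * y * z ∈ E) :
    ∃ p : E[X], p.Monic ∧ p.natDegree = 3 ∧ Polynomial.aeval x p = 0 := by
  refine ⟨.X ^ 3 - .C ⟨_, h₁⟩ * .X ^ 2 + .C ⟨_, h₂⟩ * .X - .C ⟨_, h₃⟩, by monicity!,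
    by compute_degree!, ?_⟩
  simp only [map_add, map_sub, map_mul, map_pow, Polynomial.aeval_X, Polynomial.aeval_C,
    IntermediateField.algebraMap_apply]
  ring

theorem orderOf_eq_three_of_cycle (hgen : adjoin k {x, y, z} = ⊤) {σ : K ≃ₐ[k] K}
    (hσx : σ x = y) (hσy : σ y = z) (hσz : σ z = x) (hxy : x ≠ y) : orderOf σ = 3 := by
  refine orderOf_eq_prime (algEquiv_eq_one_of_adjoin_eq_top hgen ?_) ?_
  · simp only [Set.mem_insert_iff, Set.mem_singleton_iff, forall_eq_or_imp, forall_eq]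
    simp [pow_succ, hσx, hσy, hσz]
  · rintro rfl
    exact hxy hσx

theorem mul_add_mul_add_mul_eq_of_eq_div
    (hd : x ^ 2 + y ^ 2 + z ^ 2 - x * y - y * z - z * x ≠ 0)
    (hu : u = (x ^ 2 * y + y ^ 2 * z + z ^ 2 * x - 3 * (x * y * z)) /
      (x ^ 2 + y ^ 2 + z ^ 2 - x * y - y * z - z * x))
    (hv : v = (x * y ^ 2 + y * z ^ 2 + z * x ^ 2 - 3 * (x * y * z)) /
      (x ^ 2 + y ^ 2 + z ^ 2 - x * y - y * z - z * x)) :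
    x * y + y * z + z * x = (x + y + z) * (u + v) - 3 * (u ^ 2 - u * v + v ^ 2) := by
  generalize hD : x ^ 2 + y ^ 2 + z ^ 2 - x * y - y * z - z * x = d at hd hu hv
  rw [hu, hv]
  field_simp
  rw [← hD]
  ring

theorem mul_mul_eq_of_eq_div
    (hd : x ^ 2 + y ^ 2 + z ^ 2 - x * y - y * z - z * x ≠ 0)
    (hu : u = (x ^ 2 * y + y ^ 2 * z + z ^ 2 * x - 3 * (x * y * z)) /
      (x ^ 2 + y ^ 2 + z ^ 2 - x * y - y * z - z * x))
    (hv : v = (x * y ^ 2 + y * z ^ 2 + z * x ^ 2 - 3 * (x * y * z)) /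
      (x ^ 2 + y ^ 2 + z ^ 2 - x * y - y * z - z * x)) :
    x * y * z = (x + y + z) * (u * v) - u ^ 3 - v ^ 3 := by
  generalize hD : x ^ 2 + y ^ 2 + z ^ 2 - x * y - y * z - z * x = d at hd hu hv
  rw [hu, hv]
  field_simp
  rw [← hD]
  ring

theorem mul_sub_mul_sub_eq_of_eq_div
    (hd : x ^ 2 + y ^ 2 + z ^ 2 - x * y - y * z - z * x ≠ 0)
    (hu : u = (x ^ 2 * y + y ^ 2 * z + z ^ 2 * x - 3 * (x * y * z)) /
      (x ^ 2 + y ^ 2 + z ^ 2 - x * y - y * z - z * x)) :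
    y * ((x - y) * (x - z)) =
      u * ((x + y + z) ^ 2 - 3 * (x * y + y * z + z * x)) + 3 * (x * y * z) -
        x * ((y + z) ^ 2 - y * z) := by
  generalize hD : x ^ 2 + y ^ 2 + z ^ 2 - x * y - y * z - z * x = d at hd hu
  rw [hu]
  field_simp
  rw [← hD]
  ring

theorem adjoin_simple_eq_top_of_mem {E : IntermediateField k K} (hgen : adjoin k {x, y, z} = ⊤)
    (hxy : x ≠ y) (hxz : x ≠ z)
    (hd : x ^ 2 + y ^ 2 + z ^ 2 - x * y - y * z - z * x ≠ 0)
    (hu : u = (x ^ 2 * y + y ^ 2 * z + z ^ 2 * x - 3 * (x * y * z)) /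
      (x ^ 2 + y ^ 2 + z ^ 2 - x * y - y * z - z * x))
    (h₁ : x + y + z ∈ E) (h₂ : x * y + y * z + z * x ∈ E) (h₃ : x * y * z ∈ E) (hu_mem : u ∈ E) :
    adjoin E {x} = ⊤ := by
  set T := adjoin E {x}
  have hE : ∀ w ∈ E, w ∈ T := fun w hw ↦ T.algebraMap_mem ⟨w, hw⟩
  have h3 : (3 : K) ∈ T := ofNat_mem T 3
  have hx : x ∈ T := mem_adjoin_simple_self E x
  have hsum : y + z ∈ T := by
    rw [show y + z = x + y + z - x by ring]
    exact sub_mem (hE _ h₁) hx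
  have hprod : y * z ∈ T := by
    rw [show y * z = x * y + y * z + z * x - x * (y + z) by ring]
    exact sub_mem (hE _ h₂) (mul_mem hx hsum)
  have hy : y ∈ T := by
    have hne : (x - y) * (x - z) ≠ 0 := mul_ne_zero (sub_ne_zero.2 hxy) (sub_ne_zero.2 hxz)
    rw [eq_div_of_mul_eq hne (mul_sub_mul_sub_eq_of_eq_div hd hu),
      show (x - y) * (x - z) = x ^ 2 - x * (y + z) + y * z by ring]
    have hdisc : (x + y + z) ^ 2 - 3 * (x * y + y * z + z * x) ∈ T :=
      sub_mem (pow_mem (hE _ h₁) 2) (mul_mem h3 (hE _ h₂))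
    exact div_mem
      (sub_mem (add_mem (mul_mem (hE _ hu_mem) hdisc) (mul_mem h3 (hE _ h₃)))
        (mul_mem hx (sub_mem (pow_mem hsum 2) hprod)))
      (add_mem (sub_mem (pow_mem hx 2) (mul_mem hx hsum)) hprod)
  have hz : z ∈ T := by
    rw [show z = y + z - y by ring]
    exact sub_mem hsum hy
  rw [← restrictScalars_eq_top_iff (K := k), eq_top_iff, ← hgen, adjoin_le_iff]
  simp only [Set.insert_subset_iff, Set.singleton_subset_iff, SetLike.mem_coe,
    mem_restrictScalars]
  exact ⟨hx, hy, hz⟩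

theorem fixedField_zpowers_eq_of_mem (hgen : adjoin k {x, y, z} = ⊤) {σ : K ≃ₐ[k] K}
    (hσx : σ x = y) (hσy : σ y = z) (hσz : σ z = x) (hxy : x ≠ y)
    (hd : x ^ 2 + y ^ 2 + z ^ 2 - x * y - y * z - z * x ≠ 0)
    (hu : u = (x ^ 2 * y + y ^ 2 * z + z ^ 2 * x - 3 * (x * y * z)) /
      (x ^ 2 + y ^ 2 + z ^ 2 - x * y - y * z - z * x))
    (hv : v = (x * y ^ 2 + y * z ^ 2 + z * x ^ 2 - 3 * (x * y * z)) /
      (x ^ 2 + y ^ 2 + z ^ 2 - x * y - y * z - z * x))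
    {E : IntermediateField k K} (hE : E ≤ fixedField (Subgroup.zpowers σ))
    (h₁ : x + y + z ∈ E) (hu_mem : u ∈ E) (hv_mem : v ∈ E) :
    fixedField (Subgroup.zpowers σ) = E := by
  have hxz : x ≠ z := fun h ↦ hxy (by rw [← hσx, h, hσz, h])
  have h₂ : x * y + y * z + z * x ∈ E := by
    rw [mul_add_mul_add_mul_eq_of_eq_div hd hu hv]
    have h3 : (3 : K) ∈ E := ofNat_mem E 3
    exact sub_mem (mul_mem h₁ (add_mem hu_mem hv_mem)) (mul_mem h3 (add_mem (sub_mem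
      (pow_mem hu_mem 2) (mul_mem hu_mem hv_mem)) (pow_mem hv_mem 2)))
  have h₃ : x * y * z ∈ E := by
    rw [mul_mul_eq_of_eq_div hd hu hv]
    exact sub_mem (sub_mem (mul_mem h₁ (mul_mem hu_mem hv_mem)) (pow_mem hu_mem 3))
      (pow_mem hv_mem 3)
  have horder := orderOf_eq_three_of_cycle hgen hσx hσy hσz hxy
  have : Finite (Subgroup.zpowers σ) :=
    (isOfFinOrder_iff_pow_eq_one.mpr
      ⟨3, by norm_num, horder ▸ pow_orderOf_eq_one σ⟩).finite_zpowers
  obtain ⟨p, hp, hpdeg, hpx⟩ := exists_monic_cubic_aeval_eq_zero h₁ h₂ h₃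
  refine fixedField_eq_of_adjoin_simple_eq_top hE
    (adjoin_simple_eq_top_of_mem hgen hxy hxz hd hu h₁ h₂ h₃ hu_mem) hp hpx ?_
  rw [hpdeg, Nat.card_zpowers, horder]

theorem add_add_mem_of_mul_mul_mem {E : IntermediateField k K} (hu₀ : u ≠ 0) (hv₀ : v ≠ 0)
    (hd : x ^ 2 + y ^ 2 + z ^ 2 - x * y - y * z - z * x ≠ 0)
    (hu : u = (x ^ 2 * y + y ^ 2 * z + z ^ 2 * x - 3 * (x * y * z)) /
      (x ^ 2 + y ^ 2 + z ^ 2 - x * y - y * z - z * x))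
    (hv : v = (x * y ^ 2 + y * z ^ 2 + z * x ^ 2 - 3 * (x * y * z)) /
      (x ^ 2 + y ^ 2 + z ^ 2 - x * y - y * z - z * x))
    (h₃ : x * y * z ∈ E) (hu_mem : u ∈ E) (hv_mem : v ∈ E) : x + y + z ∈ E := by
  have hs₁ : x + y + z = (x * y * z + u ^ 3 + v ^ 3) / (u * v) := by
    rw [eq_div_iff (mul_ne_zero hu₀ hv₀), mul_mul_eq_of_eq_div hd hu hv]
    ring
  rw [hs₁]
  exact div_mem (add_mem (add_mem h₃ (pow_mem hu_mem 3)) (pow_mem hv_mem 3))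
    (mul_mem hu_mem hv_mem)

theorem fixedField_zpowers_eq_adjoin (hgen : adjoin k {x, y, z} = ⊤) {σ : K ≃ₐ[k] K}
    (hσx : σ x = y) (hσy : σ y = z) (hσz : σ z = x) (hxy : x ≠ y)
    (hd : x ^ 2 + y ^ 2 + z ^ 2 - x * y - y * z - z * x ≠ 0)
    (hU : x ^ 2 * y + y ^ 2 * z + z ^ 2 * x - 3 * (x * y * z) ≠ 0)
    (hV : x * y ^ 2 + y * z ^ 2 + z * x ^ 2 - 3 * (x * y * z) ≠ 0)
    (hu : u = (x ^ 2 * y + y ^ 2 * z + z ^ 2 * x - 3 * (x * y * z)) /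
      (x ^ 2 + y ^ 2 + z ^ 2 - x * y - y * z - z * x))
    (hv : v = (x * y ^ 2 + y * z ^ 2 + z * x ^ 2 - 3 * (x * y * z)) /
      (x ^ 2 + y ^ 2 + z ^ 2 - x * y - y * z - z * x)) :
    fixedField (Subgroup.zpowers σ) = adjoin k {x + y + z, u, v} ∧
      fixedField (Subgroup.zpowers σ) = adjoin k {x * y * z, u, v} := by
  have hfix : adjoin k {x + y + z, x * y * z, u, v} ≤ fixedField (Subgroup.zpowers σ) := by
    simp only [adjoin_le_iff, Set.insert_subset_iff, Set.singleton_subset_iff, SetLike.mem_coe,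
      mem_fixedField_zpowers_iff_s4, hu, hv, map_div₀, map_add, map_sub, map_mul, map_pow,
      map_ofNat, hσx, hσy, hσz]
    exact ⟨by ring, by ring, by ring, by ring⟩
  have mem {s : Set K} {w : K} (hw : w ∈ s) : w ∈ adjoin k s := subset_adjoin k s hw
  have main (E : IntermediateField k K) :=
    fixedField_zpowers_eq_of_mem (E := E) hgen hσx hσy hσz hxy hd hu hv
  constructor
  · refine main _ ?_ (mem (by simp)) (mem (by simp)) (mem (by simp))
    exact (adjoin.mono _ _ _ (Set.insert_subset_insert (Set.subset_insert _ _))).trans hfix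
  · refine main _ ((adjoin.mono _ _ _ (Set.subset_insert _ _)).trans hfix) ?_
      (mem (by simp)) (mem (by simp))
    exact add_add_mem_of_mul_mul_mem (hu ▸ div_ne_zero hU hd) (hv ▸ div_ne_zero hV hd) hd hu hv
      (mem (by simp)) (mem (by simp)) (mem (by simp))

end

section

variable {ι k : Type*} [Field k]

theorem MvPolynomial.algebraMap_fractionRing_ne_zero (p : MvPolynomial ι k)
    (a : ι → k) (h : eval a p ≠ 0) : algebraMap _ (FractionRing (MvPolynomial ι k)) p ≠ 0 := by
  rw [Ne, IsFractionRing.to_map_eq_zero_iff]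
  rintro rfl
  exact h (map_zero _)

theorem MvPolynomial.adjoin_algebraMap_X_eq_top :
    adjoin k (Set.range fun i : ι ↦
      algebraMap (MvPolynomial ι k) (FractionRing (MvPolynomial ι k)) (X i)) = ⊤ := by
  set S := adjoin k (Set.range fun i : ι ↦
    algebraMap (MvPolynomial ι k) (FractionRing (MvPolynomial ι k)) (X i))
  have hpoly (p : MvPolynomial ι k) : algebraMap _ (FractionRing (MvPolynomial ι k)) p ∈ S := by
    induction p using MvPolynomial.induction_on with
    | C a =>
      rw [← MvPolynomial.algebraMap_eq, ← IsScalarTower.algebraMap_apply]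
      exact S.algebraMap_mem a
    | add p q hp hq => rw [map_add]; exact add_mem hp hq
    | mul_X p i hp => rw [map_mul]; exact mul_mem hp (subset_adjoin _ _ ⟨i, rfl⟩)
  refine eq_top_iff.mpr fun w _ ↦ ?_
  obtain ⟨a, b, -, rfl⟩ := IsFractionRing.div_surjective (A := MvPolynomial ι k) w
  exact div_mem (hpoly a) (hpoly b)

end

/-- **(Masuda)** Let `k` be any field and `σ` the `k`-automorphism of `k(x,y,z)` given by
the 3-cycle `x ↦ y ↦ z ↦ x`.  With `s₁ = x + y + z`, `s₃ = xyz`,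
`u = (x²y + y²z + z²x − 3xyz)/(x² + y² + z² − xy − yz − zx)` and
`v = (xy² + yz² + zx² − 3xyz)/(x² + y² + z² − xy − yz − zx)`, one has
`k(x,y,z)^⟨σ⟩ = k(s₁, u, v) = k(s₃, u, v)`. -/
theorem stmt_4 (k : Type*) [Field k]
    (x y z : FractionRing (MvPolynomial (Fin 3) k))
    (hx : x = algebraMap (MvPolynomial (Fin 3) k) _ (MvPolynomial.X 0))
    (hy : y = algebraMap (MvPolynomial (Fin 3) k) _ (MvPolynomial.X 1))
    (hz : z = algebraMap (MvPolynomial (Fin 3) k) _ (MvPolynomial.X 2))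
    (σ : FractionRing (MvPolynomial (Fin 3) k) ≃ₐ[k] FractionRing (MvPolynomial (Fin 3) k))
    (hσx : σ x = y) (hσy : σ y = z) (hσz : σ z = x)
    (s₁ s₃ u v : FractionRing (MvPolynomial (Fin 3) k))
    (hs₁ : s₁ = x + y + z) (hs₃ : s₃ = x * y * z)
    (hu : u = (x ^ 2 * y + y ^ 2 * z + z ^ 2 * x - 3 * (x * y * z)) /
      (x ^ 2 + y ^ 2 + z ^ 2 - x * y - y * z - z * x))
    (hv : v = (x * y ^ 2 + y * z ^ 2 + z * x ^ 2 - 3 * (x * y * z)) /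
      (x ^ 2 + y ^ 2 + z ^ 2 - x * y - y * z - z * x)) :
    IntermediateField.fixedField (Subgroup.zpowers σ) =
        IntermediateField.adjoin k {s₁, u, v} ∧
      IntermediateField.fixedField (Subgroup.zpowers σ) =
        IntermediateField.adjoin k {s₃, u, v} := by
  have hgen : adjoin k {x, y, z} = ⊤ := by
    rw [← adjoin_algebraMap_X_eq_top, hx, hy, hz]
    congr 1
    ext
    simp [Fin.exists_fin_succ, eq_comm]
  have hxy : x ≠ y := by simp [hx, hy]
  have hd : x ^ 2 + y ^ 2 + z ^ 2 - x * y - y * z - z * x ≠ 0 := by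
    convert algebraMap_fractionRing_ne_zero
      (X 0 ^ 2 + X 1 ^ 2 + X 2 ^ 2 - X 0 * X 1 - X 1 * X 2 - X 2 * X 0 : MvPolynomial (Fin 3) k)
      ![1, 0, 0] (by simp)
    simp [hx, hy, hz]
  have hU : x ^ 2 * y + y ^ 2 * z + z ^ 2 * x - 3 * (x * y * z) ≠ 0 := by
    convert algebraMap_fractionRing_ne_zero
      (X 0 ^ 2 * X 1 + X 1 ^ 2 * X 2 + X 2 ^ 2 * X 0 - 3 * (X 0 * X 1 * X 2) :
        MvPolynomial (Fin 3) k) ![1, 1, 0] (by simp)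
    simp [hx, hy, hz, map_ofNat]
  have hV : x * y ^ 2 + y * z ^ 2 + z * x ^ 2 - 3 * (x * y * z) ≠ 0 := by
    convert algebraMap_fractionRing_ne_zero
      (X 0 * X 1 ^ 2 + X 1 * X 2 ^ 2 + X 2 * X 0 ^ 2 - 3 * (X 0 * X 1 * X 2) :
        MvPolynomial (Fin 3) k) ![1, 1, 0] (by simp)
    simp [hx, hy, hz, map_ofNat]
  subst hs₁ hs₃
  exact fixedField_zpowers_eq_adjoin hgen hσx hσy hσz hxy hd hU hV hu hv
end

section
/- Let k be a field with char k ≠ 2 in which −1 is not a square, and let K = k(√−1). Let ρ be the automorphism of K(Y_1) of order 2 with ρ(√−1) = −√−1 and ρ(Y_1) = 1/Y_1. Then K(Y_1)^⟨ρ⟩ = k(U_0) where U_0 = √−1·(1 − Y_1)/(1 + Y_1); in particular the fixed field is rational of transcendence degree 1 over k. -/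
/-!
`U₀` is `ρ`-fixed, so `L = k(U₀)` lies in the fixed field. Conversely `Y₁` is recovered from `U₀`
as `(√−1 − U₀) / (√−1 + U₀)`, so `K(Y₁) = L(√−1)`. As `ρ` fixes `L` and negates `√−1`, we have
`√−1 ∉ L`, hence every element of `L(√−1)` is `a + b √−1` with `a, b ∈ L`; it is fixed by `ρ`
only if `b = 0`.
-/

namespace Subfield

variable {F : Type*} [Field F] {L : Subfield F} {I : F}

theorem sub_mul_ne_zero_of_add_mul_ne_zero (hIL : I ∉ L) {a b : F} (ha : a ∈ L) (hb : b ∈ L)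
    (hab : a + b * I ≠ 0) : a - b * I ≠ 0 := by
  intro h
  by_cases hb0 : b = 0
  · exact hab (by simpa [hb0] using h)
  · refine hIL ?_
    have : I = a / b := by field_simp; linear_combination -h
    exact this ▸ div_mem ha hb

variable (L I) in
def adjoinSqrt (hI2 : I ^ 2 ∈ L) (hIL : I ∉ L) : Subfield F where
  carrier := {z | ∃ a ∈ L, ∃ b ∈ L, z = a + b * I}
  mul_mem' := by
    rintro _ _ ⟨a, ha, b, hb, rfl⟩ ⟨c, hc, d, hd, rfl⟩
    exact ⟨a * c + b * d * I ^ 2, add_mem (mul_mem ha hc) (mul_mem (mul_mem hb hd) hI2),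
      a * d + b * c, add_mem (mul_mem ha hd) (mul_mem hb hc), by ring⟩
  one_mem' := ⟨1, one_mem L, 0, zero_mem L, by ring⟩
  add_mem' := by
    rintro _ _ ⟨a, ha, b, hb, rfl⟩ ⟨c, hc, d, hd, rfl⟩
    exact ⟨a + c, add_mem ha hc, b + d, add_mem hb hd, by ring⟩
  zero_mem' := ⟨0, zero_mem L, 0, zero_mem L, by ring⟩
  neg_mem' := by
    rintro _ ⟨a, ha, b, hb, rfl⟩
    exact ⟨-a, neg_mem ha, -b, neg_mem hb, by ring⟩
  inv_mem' := by
    rintro _ ⟨a, ha, b, hb, rfl⟩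
    by_cases hab : a + b * I = 0
    · exact ⟨0, zero_mem L, 0, zero_mem L, by simp [hab]⟩
    -- `(a + b I)⁻¹ = (a - b I) / N` with the norm `N = a² - b² I² ∈ L`
    have hN : a ^ 2 - b ^ 2 * I ^ 2 ≠ 0 := by
      convert mul_ne_zero hab (sub_mul_ne_zero_of_add_mul_ne_zero hIL ha hb hab) using 1
      ring
    have hNL : a ^ 2 - b ^ 2 * I ^ 2 ∈ L :=
      sub_mem (pow_mem ha 2) (mul_mem (pow_mem hb 2) hI2)
    refine ⟨a / (a ^ 2 - b ^ 2 * I ^ 2), div_mem ha hNL,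
      -b / (a ^ 2 - b ^ 2 * I ^ 2), div_mem (neg_mem hb) hNL, ?_⟩
    refine inv_eq_of_mul_eq_one_right ?_
    field_simp
    ring

theorem closure_union_singleton_le_adjoinSqrt (hI2 : I ^ 2 ∈ L) (hIL : I ∉ L) :
    closure ((L : Set F) ∪ {I}) ≤ adjoinSqrt L I hI2 hIL := by
  refine closure_le.mpr ?_
  rintro x (hx | rfl)
  · exact ⟨x, hx, 0, zero_mem L, by ring⟩
  · exact ⟨0, zero_mem L, 1, one_mem L, by ring⟩

theorem setOf_apply_eq_self_eq (σ : F →+* F) (hσL : ∀ z ∈ L, σ z = z) (hσI : σ I = -I)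
    (h2 : (2 : F) ≠ 0) (hI0 : I ≠ 0) (hI2 : I ^ 2 ∈ L)
    (htop : closure ((L : Set F) ∪ {I}) = ⊤) :
    {z | σ z = z} = L := by
  have hIL : I ∉ L := fun h ↦ by
    have := hσL I h
    rw [hσI, neg_eq_iff_add_eq_zero, ← two_mul] at this
    exact mul_ne_zero h2 hI0 this
  refine Set.Subset.antisymm (fun z hz ↦ ?_) hσL
  obtain ⟨a, ha, b, hb, rfl⟩ :=
    closure_union_singleton_le_adjoinSqrt hI2 hIL (htop ▸ mem_top z)
  have hb0 : 2 * I * b = 0 := by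
    have : σ (a + b * I) = a - b * I := by rw [map_add, map_mul, hσL a ha, hσL b hb, hσI]; ring
    linear_combination hz.symm.trans this
  rw [mul_eq_zero_iff_left (mul_ne_zero h2 hI0)] at hb0
  simpa [hb0] using ha

end Subfield

namespace RatFunc

variable {K : Type*} [Field K]

theorem subfield_eq_top_of_C_mem_of_X_mem {S : Subfield (RatFunc K)} (hC : ∀ c, C c ∈ S)
    (hX : X ∈ S) : S = ⊤ := by
  have htop : Subfield.closure (Set.range (C : K →+* RatFunc K) ∪ {X}) = ⊤ := by
    simpa [algebraMap_eq_C] using congrArg IntermediateField.toSubfield (adjoin_X (K := K))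
  rw [eq_top_iff, ← htop, Subfield.closure_le]
  rintro _ (⟨c, rfl⟩ | rfl)
  exacts [hC c, hX]

theorem subfield_eq_top_of_mem_of_adjoin_eq_top {k : Type*} [Field k] [Algebra k K] {s : Set K}
    (hs : IntermediateField.adjoin k s = ⊤) {S : Subfield (RatFunc K)}
    (hk : ∀ a, C (algebraMap k K a) ∈ S) (hsS : ∀ x ∈ s, C x ∈ S) (hX : X ∈ S) : S = ⊤ := by
  have hK : Subfield.closure (Set.range (algebraMap k K) ∪ s) = ⊤ := by
    simpa using congrArg IntermediateField.toSubfield hs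
  have : Subfield.closure (Set.range (algebraMap k K) ∪ s) ≤ S.comap C := by
    rw [Subfield.closure_le]
    rintro _ (⟨a, rfl⟩ | hx)
    exacts [hk a, hsS _ hx]
  exact subfield_eq_top_of_C_mem_of_X_mem (fun c ↦ this (hK ▸ Subfield.mem_top c)) hX

theorem one_add_X_ne_zero : (1 + X : RatFunc K) ≠ 0 := by
  simpa [add_comm] using algebraMap_ne_zero (Polynomial.X_add_C_ne_zero (1 : K))

end RatFunc

theorem eq_div_of_cayley {F : Type*} [Field F] {x i : F} (hx : 1 + x ≠ 0) (hi : i ≠ 0)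
    (h2 : (2 : F) ≠ 0) :
    x = (i - i * (1 - x) / (1 + x)) / (i + i * (1 - x) / (1 + x)) := by
  have hden : i + i * (1 - x) / (1 + x) = 2 * i / (1 + x) := by field_simp; ring
  rw [hden, eq_div_iff (div_ne_zero (mul_ne_zero h2 hi) hx)]
  field_simp
  ring

theorem neg_mul_one_sub_inv_div_one_add_inv {F : Type*} [Field F] (i : F) {x : F} (hx : x ≠ 0) :
    -i * (1 - x⁻¹) / (1 + x⁻¹) = i * (1 - x) / (1 + x) := by
  rw [← mul_div_mul_right _ _ hx, mul_assoc, sub_mul, add_mul, inv_mul_cancel₀ hx]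
  ring

theorem stmt_10_general (k K : Type*) [Field k] [Field K] [Algebra k K]
    (hchar : (2 : k) ≠ 0)
    (i : K) (hi : i ^ 2 = -1)
    (hKgen : IntermediateField.adjoin k {i} = ⊤)
    (ρ : RatFunc K ≃+* RatFunc K)
    (hρk : ∀ a : k, ρ (RatFunc.C (algebraMap k K a)) = RatFunc.C (algebraMap k K a))
    (hρi : ρ (RatFunc.C i) = -RatFunc.C i)
    (hρX : ρ RatFunc.X = RatFunc.X⁻¹)
    (U₀ : RatFunc K)
    (hU₀ : U₀ = RatFunc.C i * (1 - RatFunc.X) / (1 + RatFunc.X)) :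
    {z : RatFunc K | ρ z = z} =
      (Subfield.closure
        (Set.range (fun a : k => RatFunc.C (algebraMap k K a)) ∪ {U₀}) :
          Subfield (RatFunc K)) := by
  set L := Subfield.closure (Set.range (fun a : k => RatFunc.C (algebraMap k K a)) ∪ {U₀})
  have h2 : (2 : RatFunc K) ≠ 0 := by
    simpa only [map_ofNat, map_zero] using (algebraMap k (RatFunc K)).injective.ne hchar
  have hi0 : RatFunc.C i ≠ 0 := by rintro h; simpa [h] using congrArg RatFunc.C hi
  have hρU : ρ U₀ = U₀ := by
    rw [hU₀, map_div₀, map_mul, map_sub, map_add, map_one, hρi, hρX]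
    exact neg_mul_one_sub_inv_div_one_add_inv _ RatFunc.X_ne_zero
  have hρL : L ≤ RingHom.eqLocusField (ρ : RatFunc K →+* RatFunc K) (.id _) := by
    rw [Subfield.closure_le]
    rintro _ (⟨a, rfl⟩ | rfl)
    exacts [hρk a, hρU]
  have htop : Subfield.closure ((L : Set (RatFunc K)) ∪ {RatFunc.C i}) = ⊤ := by
    have hLM z (hz : z ∈ L) : z ∈ Subfield.closure ((L : Set (RatFunc K)) ∪ {RatFunc.C i}) :=
      Subfield.subset_closure (Or.inl hz)
    have hiM := Subfield.subset_closure (s := (L : Set (RatFunc K)) ∪ {RatFunc.C i}) (Or.inr rfl)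
    have hUM := hLM U₀ (Subfield.subset_closure (Or.inr rfl))
    refine RatFunc.subfield_eq_top_of_mem_of_adjoin_eq_top hKgen
      (fun a ↦ hLM _ (Subfield.subset_closure (Or.inl ⟨a, rfl⟩))) (by simpa using hiM) ?_
    rw [eq_div_of_cayley RatFunc.one_add_X_ne_zero hi0 h2, ← hU₀]
    exact div_mem (sub_mem hiM hUM) (add_mem hiM hUM)
  exact Subfield.setOf_apply_eq_self_eq (ρ : RatFunc K →+* RatFunc K) (fun _ hz ↦ hρL hz) hρi h2 hi0
    (by rw [← map_pow, hi, map_neg, map_one]; exact neg_mem (one_mem L)) htop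

/-- Let `k` be a field with `char k ≠ 2` in which `−1` is not a square, and `K = k(√−1)`.
Let `ρ` be the automorphism of `K(Y₁)` of order 2 with `ρ(√−1) = −√−1`, `ρ` fixing `k`,
and `ρ(Y₁) = 1/Y₁`.  Then `K(Y₁)^⟨ρ⟩ = k(U₀)` where `U₀ = √−1·(1 − Y₁)/(1 + Y₁)`. -/
theorem stmt_10 (k K : Type*) [Field k] [Field K] [Algebra k K]
    (hchar : (2 : k) ≠ 0) (hnsq : ¬∃ a : k, a ^ 2 = -1)
    (i : K) (hi : i ^ 2 = -1)
    (hKgen : IntermediateField.adjoin k {i} = ⊤)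
    (ρ : RatFunc K ≃+* RatFunc K)
    (hρk : ∀ a : k, ρ (RatFunc.C (algebraMap k K a)) = RatFunc.C (algebraMap k K a))
    (hρi : ρ (RatFunc.C i) = -RatFunc.C i)
    (hρX : ρ RatFunc.X = RatFunc.X⁻¹)
    (hρ2 : ∀ z, ρ (ρ z) = z)
    (U₀ : RatFunc K)
    (hU₀ : U₀ = RatFunc.C i * (1 - RatFunc.X) / (1 + RatFunc.X)) :
    {z : RatFunc K | ρ z = z} =
      (Subfield.closure
        (Set.range (fun a : k => RatFunc.C (algebraMap k K a)) ∪ {U₀}) :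
          Subfield (RatFunc K)) :=
  stmt_10_general k K hchar i hi hKgen ρ hρk hρi hρX U₀ hU₀
end

section
/- Let k be a field with char k ≠ 2. The function field of the affine threefold in 𝔸⁴_k (coordinates w_1, w_2, w_3, w_4) defined by 2w_3² + w_4² = (w_1 + 4w_2²)(2w_1 − 1 + 6w_2²) is purely transcendental over k. Explicitly, setting s = w_3/(w_1 + 4w_2²) and t = w_4/(w_1 + 4w_2²), the relation gives 2s² + t² = (2w_1 − 1 + 6w_2²)/(w_1 + 4w_2²), from which w_1 is a rational function of w_2, s, t, so k(w_1, w_2, w_3, w_4) = k(w_2, s, t). -/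
/-!
Away from `D := w₀ + 4w₁² = 0` the threefold is rational: with `s = w₂/D`, `t = w₃/D` the
equation reads `(2s² + t² - 2) D = -(2w₁² + 1)`, so
`w = (D - 4w₁², w₁, D s, D t)` with `D = -(2w₁² + 1)/(2s² + t² - 2)` (`threefoldParam`).
This shows that `w₁, s, t` generate the function field. For their algebraic independence, a
relation `p(w₁, s, t) = 0` multiplied by a suitable power of `D` becomes a polynomial in `w`,
hence a multiple of the defining equation. The same parametrization at a generic point
`(x, s, t)` of `𝔸³` satisfies that equation, so `p` vanishes at the generic point and `p = 0`.
-/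

open MvPolynomial

section ClearDenominators

variable {R A σ ι : Type*} [CommSemiring R] [CommSemiring A] [Algebra R A]

noncomputable def clearDenom (ε : σ → ℕ) (p : MvPolynomial σ R) : MvPolynomial (Option σ) R :=
  ∑ m ∈ p.support, rename some (monomial m (coeff m p)) *
    X none ^ (p.weightedTotalDegree ε - Finsupp.weight ε m)

theorem aeval_clearDenom (ε : σ → ℕ) (p : MvPolynomial σ R) (e : A) (u : σ → A) :
    aeval (fun j => j.elim e fun i => e ^ ε i * u i) (clearDenom ε p) =
      e ^ p.weightedTotalDegree ε * aeval u p := by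
  conv_rhs => arg 2; rw [p.as_sum]
  rw [map_sum, Finset.mul_sum, clearDenom, map_sum]
  refine Finset.sum_congr rfl fun m hm => ?_
  have hdeg : Finsupp.weight ε m ≤ p.weightedTotalDegree ε := le_weightedTotalDegree ε hm
  have hscale : m.prod (fun i n => (e ^ ε i * u i) ^ n) =
      e ^ Finsupp.weight ε m * m.prod (fun i n => u i ^ n) := by
    simp only [mul_pow, ← pow_mul, Finsupp.weight_apply, smul_eq_mul, Finsupp.prod, Finsupp.sum,
      Finset.prod_mul_distrib, Finset.prod_pow_eq_pow_sum, mul_comm (ε _)]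
  rw [map_mul, aeval_rename, map_pow, aeval_X, aeval_monomial, aeval_monomial]
  simp only [Function.comp_def, Option.elim_some, Option.elim_none, hscale]
  rw [← pow_sub_mul_pow e hdeg]
  ring

theorem aeval_bind₁_clearDenom (ε : σ → ℕ) (d : MvPolynomial ι R) (g : σ → MvPolynomial ι R)
    (x : ι → A) {y : σ → A} (hy : ∀ i, aeval x (g i) = aeval x d ^ ε i * y i)
    (p : MvPolynomial σ R) :
    aeval x (bind₁ (fun j => j.elim d g) (clearDenom ε p)) =
      aeval x d ^ p.weightedTotalDegree ε * aeval y p := by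
  rw [aeval_bind₁, ← aeval_clearDenom]
  congr 1
  ext (_ | i) <;> simp [hy]

end ClearDenominators

theorem AlgebraicIndependent.of_ker_aeval_le {R ι σ A B : Type*} [CommRing R] [CommRing A]
    [CommRing B] [NoZeroDivisors B] [Algebra R A] [Algebra R B] {w : ι → A} {v : ι → B}
    (hker : RingHom.ker (aeval (R := R) w) ≤ RingHom.ker (aeval v))
    (ε : σ → ℕ) (d : MvPolynomial ι R) (g : σ → MvPolynomial ι R)
    {u : σ → A} (hu : ∀ i, aeval w (g i) = aeval w d ^ ε i * u i)
    {u' : σ → B} (hu' : ∀ i, aeval v (g i) = aeval v d ^ ε i * u' i)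
    (hd : aeval v d ≠ 0) (hind : AlgebraicIndependent R u') : AlgebraicIndependent R u := by
  refine algebraicIndependent_iff.2 fun p hp => hind.eq_zero_of_aeval_eq_zero p ?_
  have hw : bind₁ (fun j => j.elim d g) (clearDenom ε p) ∈ RingHom.ker (aeval w) := by
    rw [RingHom.mem_ker, aeval_bind₁_clearDenom ε d g w hu, hp, mul_zero]
  have hv := RingHom.mem_ker.1 (hker hw)
  rw [aeval_bind₁_clearDenom ε d g v hu'] at hv
  exact (mul_eq_zero.1 hv).resolve_left (pow_ne_zero _ hd)

universe u v

theorem exists_field_algebraicIndependent (k : Type u) (σ : Type v) [CommRing k] [IsDomain k] :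
    ∃ (K : Type max u v) (_ : Field K) (_ : Algebra k K) (y : σ → K), AlgebraicIndependent k y :=
  ⟨_, inferInstance, inferInstance, _, (algebraicIndependent_X σ k).map'
    (f := IsScalarTower.toAlgHom k _ (FractionRing (MvPolynomial σ k)))
    (IsFractionRing.injective _ _)⟩

theorem AlgebraicIndependent.aeval_ne_zero_of_constantCoeff_ne_zero {R ι A : Type*} [CommRing R]
    [CommRing A] [Algebra R A] {u : ι → A} (hu : AlgebraicIndependent R u)
    {p : MvPolynomial ι R} (hp : constantCoeff p ≠ 0) : aeval u p ≠ 0 :=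
  fun h => hp (by rw [hu.eq_zero_of_aeval_eq_zero p h, map_zero])

section Threefold

variable (k : Type*) [CommRing k]

noncomputable def threefoldPoly : MvPolynomial (Fin 4) k :=
  2 * (X 2) ^ 2 + (X 3) ^ 2 - (X 0 + 4 * (X 1) ^ 2) * (2 * X 0 - 1 + 6 * (X 1) ^ 2)

variable {k} {K : Type*} [Field K]

noncomputable def threefoldParam (x s t : K) : Fin 4 → K :=
  let D := -(2 * x ^ 2 + 1) / (2 * s ^ 2 + t ^ 2 - 2)
  ![D - 4 * x ^ 2, x, D * s, D * t]

variable {x s t : K}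

theorem threefoldParam_mem (M : Subfield K) (hx : x ∈ M) (hs : s ∈ M) (ht : t ∈ M)
    (i : Fin 4) : threefoldParam x s t i ∈ M := by
  have hD : -(2 * x ^ 2 + 1) / (2 * s ^ 2 + t ^ 2 - 2) ∈ M := by
    apply div_mem <;> apply_rules [neg_mem, add_mem, sub_mem, mul_mem, pow_mem, one_mem, ofNat_mem]
  fin_cases i <;> simp only [threefoldParam] <;> apply_rules [sub_mem, mul_mem, pow_mem, ofNat_mem]

variable [Algebra k K]

theorem aeval_threefoldPoly (v : Fin 4 → K) :
    aeval v (threefoldPoly k) =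
      2 * v 2 ^ 2 + v 3 ^ 2 - (v 0 + 4 * v 1 ^ 2) * (2 * v 0 - 1 + 6 * v 1 ^ 2) := by
  simp [threefoldPoly]

theorem two_sq_add_sq_eq_of_aeval_threefoldPoly {v : Fin 4 → K}
    (hv : aeval v (threefoldPoly k) = 0) (hD : v 0 + 4 * v 1 ^ 2 ≠ 0) :
    2 * (v 2 / (v 0 + 4 * v 1 ^ 2)) ^ 2 + (v 3 / (v 0 + 4 * v 1 ^ 2)) ^ 2 =
      (2 * v 0 - 1 + 6 * v 1 ^ 2) / (v 0 + 4 * v 1 ^ 2) := by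
  rw [aeval_threefoldPoly, sub_eq_zero] at hv
  field_simp
  linear_combination hv

theorem aeval_threefoldParam_denom :
    aeval (threefoldParam x s t) (X 0 + 4 * X 1 ^ 2 : MvPolynomial (Fin 4) k) =
      -(2 * x ^ 2 + 1) / (2 * s ^ 2 + t ^ 2 - 2) := by
  simp [threefoldParam]

theorem aeval_threefoldParam_numer (i : Fin 3) :
    aeval (threefoldParam x s t) (![X 1, X 2, X 3] i : MvPolynomial (Fin 4) k) =
      aeval (threefoldParam x s t) (X 0 + 4 * X 1 ^ 2 : MvPolynomial (Fin 4) k) ^ ![0, 1, 1] i *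
        ![x, s, t] i := by
  rw [aeval_threefoldParam_denom]
  fin_cases i <;> simp [threefoldParam]

theorem aeval_threefoldPoly_threefoldParam (h : 2 * s ^ 2 + t ^ 2 - 2 ≠ 0) :
    aeval (threefoldParam x s t) (threefoldPoly k) = 0 := by
  simp [aeval_threefoldPoly, threefoldParam]
  field_simp
  ring

theorem eq_threefoldParam {v : Fin 4 → K} (hv : aeval v (threefoldPoly k) = 0)
    (hD : v 0 + 4 * v 1 ^ 2 ≠ 0) (hx : 2 * v 1 ^ 2 + 1 ≠ 0) :
    v = threefoldParam (v 1) (v 2 / (v 0 + 4 * v 1 ^ 2)) (v 3 / (v 0 + 4 * v 1 ^ 2)) := by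
  have hrel := two_sq_add_sq_eq_of_aeval_threefoldPoly hv hD
  set D := v 0 + 4 * v 1 ^ 2
  have hA : (2 * (v 2 / D) ^ 2 + (v 3 / D) ^ 2 - 2) * D = -(2 * v 1 ^ 2 + 1) := by
    rw [sub_mul, hrel, div_mul_cancel₀ _ hD]; ring
  have hA0 : 2 * (v 2 / D) ^ 2 + (v 3 / D) ^ 2 - 2 ≠ 0 := by
    rintro h; rw [h, zero_mul] at hA; exact hx (neg_eq_zero.1 hA.symm)
  have hDeq : -(2 * v 1 ^ 2 + 1) / (2 * (v 2 / D) ^ 2 + (v 3 / D) ^ 2 - 2) = D := by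
    rw [← hA, mul_div_cancel_left₀ _ hA0]
  simp only [threefoldParam, hDeq]
  ext i
  fin_cases i <;> simp [D, mul_div_cancel₀ _ hD]

theorem AlgebraicIndependent.two_sq_add_one_ne_zero [Nontrivial k] {y : Fin 3 → K}
    (hy : AlgebraicIndependent k y) : 2 * y 0 ^ 2 + 1 ≠ 0 := by
  have h := hy.aeval_ne_zero_of_constantCoeff_ne_zero
    (p := (2 * X 0 ^ 2 + 1 : MvPolynomial (Fin 3) k)) (by simp)
  simpa using h

theorem AlgebraicIndependent.two_sq_add_sq_sub_two_ne_zero {y : Fin 3 → K}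
    (hy : AlgebraicIndependent k y) (h2 : (2 : k) ≠ 0) : 2 * y 1 ^ 2 + y 2 ^ 2 - 2 ≠ 0 := by
  have h := hy.aeval_ne_zero_of_constantCoeff_ne_zero
    (p := (2 * X 1 ^ 2 + X 2 ^ 2 - 2 : MvPolynomial (Fin 3) k)) (by simpa [map_ofNat] using h2)
  simpa using h

variable {L : Type*} [Field L] [Algebra k L]

theorem two_sq_add_one_ne_zero_of_ker_le {v : Fin 4 → L}
    (hker : RingHom.ker (aeval (R := k) v) ≤ RingHom.ker (aeval (threefoldParam x s t)))
    (hx : 2 * x ^ 2 + 1 ≠ 0) : 2 * v 1 ^ 2 + 1 ≠ 0 := fun h => hx <| by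
  have h1 := hker (x := (2 * X 1 ^ 2 + 1 : MvPolynomial (Fin 4) k)) (by simp [h])
  simpa [threefoldParam] using h1

theorem AlgebraicIndependent.of_ker_aeval_threefoldParam_le {a b c : L} {y : Fin 3 → K}
    (hy : AlgebraicIndependent k y) (hchar : (2 : k) ≠ 0)
    (hker : RingHom.ker (aeval (R := k) (threefoldParam a b c)) ≤
      RingHom.ker (aeval (threefoldParam (y 0) (y 1) (y 2)))) :
    AlgebraicIndependent k ![a, b, c] := by
  have : Nontrivial k := nontrivial_of_ne _ _ hchar
  have hy' : ![y 0, y 1, y 2] = y := by ext i; fin_cases i <;> rfl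
  refine AlgebraicIndependent.of_ker_aeval_le hker ![0, 1, 1] _ _ aeval_threefoldParam_numer
    ?_ ?_ (hy'.symm ▸ hy)
  · rw [← hy']; exact aeval_threefoldParam_numer
  · rw [aeval_threefoldParam_denom]
    exact div_ne_zero (neg_ne_zero.2 hy.two_sq_add_one_ne_zero)
      (hy.two_sq_add_sq_sub_two_ne_zero hchar)

end Threefold

/-- Let `k` be a field with `char k ≠ 2` and let `F = k(w₁,w₂,w₃,w₄)` be the function
field of the affine threefold `{2w₃² + w₄² = (w₁ + 4w₂²)(2w₁ − 1 + 6w₂²)} ⊆ 𝔸⁴_k`.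
Setting `s = w₃/(w₁ + 4w₂²)` and `t = w₄/(w₁ + 4w₂²)`, the relation gives
`2s² + t² = (2w₁ − 1 + 6w₂²)/(w₁ + 4w₂²)`, from which `w₁` is a rational function of
`w₂, s, t`; hence `k(w₁,w₂,w₃,w₄) = k(w₂, s, t)` is purely transcendental over `k`. -/
theorem stmt_13 (k F : Type*) [Field k] [Field F] [Algebra k F]
    (hchar : (2 : k) ≠ 0) (w : Fin 4 → F)
    (hker : RingHom.ker (MvPolynomial.aeval (R := k) w) = Ideal.span
      {2 * (MvPolynomial.X 2) ^ 2 + (MvPolynomial.X 3) ^ 2 -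
        (MvPolynomial.X 0 + 4 * (MvPolynomial.X 1) ^ 2) *
          (2 * MvPolynomial.X 0 - 1 + 6 * (MvPolynomial.X 1) ^ 2)})
    (hgen : IntermediateField.adjoin k (Set.range w) = ⊤)
    (hne : w 0 + 4 * (w 1) ^ 2 ≠ 0)
    (s t : F) (hs : s = w 2 / (w 0 + 4 * (w 1) ^ 2)) (ht : t = w 3 / (w 0 + 4 * (w 1) ^ 2)) :
    (2 * s ^ 2 + t ^ 2 =
        (2 * w 0 - 1 + 6 * (w 1) ^ 2) / (w 0 + 4 * (w 1) ^ 2)) ∧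
      IntermediateField.adjoin k {w 1, s, t} = ⊤ ∧
      AlgebraicIndependent k ![w 1, s, t] := by
  change RingHom.ker (aeval w) = Ideal.span {threefoldPoly k} at hker
  have hw : aeval w (threefoldPoly k) = 0 := by
    rw [← RingHom.mem_ker, hker]; exact Ideal.mem_span_singleton_self _
  obtain ⟨K, _, _, y, hy⟩ := exists_field_algebraicIndependent k (Fin 3)
  have hker_le :
      RingHom.ker (aeval (R := k) w) ≤ RingHom.ker (aeval (threefoldParam (y 0) (y 1) (y 2))) := by
    rw [hker, Ideal.span_le, Set.singleton_subset_iff]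
    exact aeval_threefoldPoly_threefoldParam (hy.two_sq_add_sq_sub_two_ne_zero hchar)
  have hw1 := two_sq_add_one_ne_zero_of_ker_le hker_le hy.two_sq_add_one_ne_zero
  have hw_param : w = threefoldParam (w 1) s t := hs ▸ ht ▸ eq_threefoldParam hw hne hw1
  refine ⟨hs ▸ ht ▸ two_sq_add_sq_eq_of_aeval_threefoldPoly hw hne, ?_, ?_⟩
  · rw [eq_top_iff, ← hgen, IntermediateField.adjoin_le_iff]
    rintro _ ⟨i, rfl⟩
    rw [hw_param]
    apply threefoldParam_mem (IntermediateField.adjoin k {w 1, s, t}).toSubfield <;>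
      exact IntermediateField.subset_adjoin k _ (by simp)
  · rw [hw_param] at hker_le
    exact hy.of_ker_aeval_threefoldParam_le hchar hker_le
end
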